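/- In the setting of harmonic-type extensions: let V, Λ, T, R, V⁰ be as before, and for ν ∈ Λ let B(ν) : V → V* be symmetric, coercive with constant c > 0, and suppose ν ↦ B(ν) is Lipschitz (via composition with a Lipschitz solution map F) on a bounded set U ⊂ Λ, and F'(ν) ∈ B(Λ, V) solves ⟨B(ν)F'(ν)η, v⟩ = 0 for v ∈ V⁰, T F'(ν)η = η. Then ν ↦ F'(ν) is Lipschitz continuous from U to B(Λ, V): ‖F'(ν)η − F'(λ)η‖_V ≤ (C/c)‖ν − λ‖_Λ ‖η‖_Λ for ν, λ ∈ U, η ∈ Λ. -/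

import Mathlib

/-!
Write `w = F'(ν)η − F'(λ)η`. Since both have trace `η`, `T w = 0`, so `w` is an admissible test
function in both harmonicity equations, which turn the energy `⟨B(ν)w, w⟩` into
`⟨(B(λ) − B(ν))F'(λ)η, w⟩`. Coercivity bounds the energy below by `c‖w‖²`, the Lipschitz bound
on `B` bounds it above by `C₂‖λ − ν‖‖F'(λ)η‖‖w‖`, and `‖F'(λ)η‖ ≤ C₁‖η‖` finishes the estimate.
-/

section CoerciveEstimate

variable {V : Type*} [NormedAddCommGroup V] [NormedSpace ℝ V]

theorem norm_le_div_of_coercive {b : V →L[ℝ] StrongDual ℝ V} {w : V} {c K : ℝ}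
    (hc : 0 < c) (hK : 0 ≤ K) (hcoer : c * ‖w‖ ^ 2 ≤ b w w) (hb : b w w ≤ K * ‖w‖) :
    ‖w‖ ≤ K / c := by
  rw [le_div_iff₀' hc]
  rcases (norm_nonneg w).eq_or_lt with hw | hw
  · rw [← hw, mul_zero]
    exact hK
  · exact le_of_mul_le_mul_right (by nlinarith) hw

theorem apply_sub_apply_eq_of_apply_eq_zero {b₀ b₁ : V →L[ℝ] StrongDual ℝ V} {u₀ u₁ w : V}
    (h₀ : b₀ u₀ w = 0) (h₁ : b₁ u₁ w = 0) :
    b₀ (u₀ - u₁) w = (b₁ u₁ - b₀ u₁) w := by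
  simp only [map_sub, sub_apply, h₀, h₁]

theorem norm_sub_le_div_of_apply_eq_zero {b₀ b₁ : V →L[ℝ] StrongDual ℝ V} {u₀ u₁ : V} {c K : ℝ}
    (hc : 0 < c) (hcoer : c * ‖u₀ - u₁‖ ^ 2 ≤ b₀ (u₀ - u₁) (u₀ - u₁))
    (h₀ : b₀ u₀ (u₀ - u₁) = 0) (h₁ : b₁ u₁ (u₀ - u₁) = 0) (hK : ‖b₁ u₁ - b₀ u₁‖ ≤ K) :
    ‖u₀ - u₁‖ ≤ K / c := by
  refine norm_le_div_of_coercive hc ((norm_nonneg _).trans hK) hcoer ?_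
  rw [apply_sub_apply_eq_of_apply_eq_zero h₀ h₁]
  calc (b₁ u₁ - b₀ u₁) (u₀ - u₁) ≤ ‖b₁ u₁ - b₀ u₁‖ * ‖u₀ - u₁‖ :=
        (le_abs_self _).trans ((b₁ u₁ - b₀ u₁).le_opNorm _)
    _ ≤ K * ‖u₀ - u₁‖ := by gcongr

end CoerciveEstimate

theorem stmt_16_general {V Λ : Type*}
    [NormedAddCommGroup V] [InnerProductSpace ℝ V]
    [NormedAddCommGroup Λ] [InnerProductSpace ℝ Λ]
    (T : V →L[ℝ] Λ)
    (U : Set Λ)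
    (B : Λ → V →L[ℝ] StrongDual ℝ V) (c C₁ C₂ : ℝ)
    (hc : 0 < c) (hC₂ : 0 < C₂)
    (hcoer : ∀ ν ∈ U, ∀ u : V, c * ‖u‖ ^ 2 ≤ B ν u u)
    (hBlip : ∀ ν ∈ U, ∀ lam ∈ U, ∀ u : V, ‖B lam u - B ν u‖ ≤ C₂ * ‖lam - ν‖ * ‖u‖)
    (F' : Λ → Λ →L[ℝ] V)
    (hFbdd : ∀ ν ∈ U, ∀ η : Λ, ‖F' ν η‖ ≤ C₁ * ‖η‖)
    (htrace : ∀ ν ∈ U, ∀ η : Λ, T (F' ν η) = η)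
    (hharm : ∀ ν ∈ U, ∀ η : Λ, ∀ v : V, T v = 0 → B ν (F' ν η) v = 0) :
    ∀ ν ∈ U, ∀ lam ∈ U, ∀ η : Λ,
      ‖F' ν η - F' lam η‖ ≤ (C₂ * C₁ / c) * ‖ν - lam‖ * ‖η‖ := by
  intro ν hν lam hlam η
  have hT : T (F' ν η - F' lam η) = 0 := by
    rw [map_sub, htrace ν hν η, htrace lam hlam η, sub_self]
  calc ‖F' ν η - F' lam η‖ ≤ C₂ * ‖lam - ν‖ * ‖F' lam η‖ / c :=
        norm_sub_le_div_of_apply_eq_zero hc (hcoer ν hν _) (hharm ν hν η _ hT)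
          (hharm lam hlam η _ hT) (hBlip ν hν lam hlam _)
    _ ≤ C₂ * ‖lam - ν‖ * (C₁ * ‖η‖) / c := by
        gcongr
        exact hFbdd lam hlam η
    _ = (C₂ * C₁ / c) * ‖ν - lam‖ * ‖η‖ := by
        rw [norm_sub_rev]
        ring

/-- Lipschitz continuity of `ν ↦ F'(ν)`: if `B(ν)` is coercive with constant `c`, `F'`
is bounded by `C₁` on `U`, and `ν ↦ B(ν)` is Lipschitz with constant `C₂` on `U`, then
`‖F'(ν)η − F'(λ)η‖ ≤ (C₂C₁/c)‖ν − λ‖‖η‖` for `ν, λ ∈ U`. -/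
theorem stmt_16 {V Λ : Type*}
    [NormedAddCommGroup V] [InnerProductSpace ℝ V] [CompleteSpace V]
    [NormedAddCommGroup Λ] [InnerProductSpace ℝ Λ] [CompleteSpace Λ]
    (T : V →L[ℝ] Λ) (R : Λ →L[ℝ] V) (hTR : ∀ η : Λ, T (R η) = η)
    (U : Set Λ) (hU : Bornology.IsBounded U)
    (B : Λ → V →L[ℝ] StrongDual ℝ V) (c C₁ C₂ : ℝ)
    (hc : 0 < c) (hC₁ : 0 < C₁) (hC₂ : 0 < C₂)
    (hsym : ∀ ν ∈ U, ∀ u v : V, B ν u v = B ν v u)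
    (hcoer : ∀ ν ∈ U, ∀ u : V, c * ‖u‖ ^ 2 ≤ B ν u u)
    (hBlip : ∀ ν ∈ U, ∀ lam ∈ U, ∀ u : V, ‖B lam u - B ν u‖ ≤ C₂ * ‖lam - ν‖ * ‖u‖)
    (F' : Λ → Λ →L[ℝ] V)
    (hFbdd : ∀ ν ∈ U, ∀ η : Λ, ‖F' ν η‖ ≤ C₁ * ‖η‖)
    (htrace : ∀ ν ∈ U, ∀ η : Λ, T (F' ν η) = η)
    (hharm : ∀ ν ∈ U, ∀ η : Λ, ∀ v : V, T v = 0 → B ν (F' ν η) v = 0) :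
    ∀ ν ∈ U, ∀ lam ∈ U, ∀ η : Λ,
      ‖F' ν η - F' lam η‖ ≤ (C₂ * C₁ / c) * ‖ν - lam‖ * ‖η‖ :=
  stmt_16_general T U B c C₁ C₂ hc hC₂ hcoer hBlip F' hFbdd htrace hharm
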